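/- Let B be an instance of (2,2)-E3-SAT and let I(B) be the one-to-one HRC instance constructed from B as described. Then B is satisfiable if and only if I(B) admits a stable matching. -/

import Mathlib

/-- A one-to-one HRC instance: residents are partitioned into single residents and
ordered couples; all hospitals have capacity 1. -/
structure HRC1 (R H : Type) where
  singles : List R
  couples : List (R × R)
  singlePref : R → List H
  couplePref : R × R → List (H × H)
  hospPref : H → List R

namespace HRC1

/-- `x` precedes `y` on the strict preference list `l`. -/
def Prefers {α : Type} [DecidableEq α] (l : List α) (x y : α) : Prop :=
  x ∈ l ∧ y ∈ l ∧ l.idxOf x < l.idxOf y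

variable {R H : Type} [DecidableEq R] [DecidableEq H]

/-- `M` is a matching of the instance `I`. -/
def IsMatching (I : HRC1 R H) (M : R → Option H) : Prop :=
  (∀ r₁ r₂ h, M r₁ = some h → M r₂ = some h → r₁ = r₂) ∧
  (∀ r ∈ I.singles, ∀ h, M r = some h → h ∈ I.singlePref r) ∧
  (∀ c ∈ I.couples,
    (M c.1 = none ∧ M c.2 = none) ∨
    ∃ hp ∈ I.couplePref c, M c.1 = some hp.1 ∧ M c.2 = some hp.2) ∧
  (∀ r, (M r).isSome → r ∈ I.singles ∨ ∃ c ∈ I.couples, r = c.1 ∨ r = c.2)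

/-- Hospital `h` is unmatched in `M`. -/
def HospFree (M : R → Option H) (h : H) : Prop := ∀ r, M r ≠ some h

/-- Hospital `h` is unmatched in `M`, or prefers `r` to its current assignee. -/
def HospOpenFor (I : HRC1 R H) (M : R → Option H) (h : H) (r : R) : Prop :=
  HospFree M h ∨ ∃ r', M r' = some h ∧ Prefers (I.hospPref h) r r'

/-- Blocking pair consisting of a single resident `r` and a hospital `h`. -/
def BlockSingle (I : HRC1 R H) (M : R → Option H) (r : R) (h : H) : Prop :=
  r ∈ I.singles ∧ h ∈ I.singlePref r ∧
  (M r = none ∨ ∃ h', M r = some h' ∧ Prefers (I.singlePref r) h h') ∧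
  I.HospOpenFor M h r

/-- Blocking pair consisting of a couple `c` and a pair of hospitals `hp` on its joint list. -/
def BlockCouple (I : HRC1 R H) (M : R → Option H) (c : R × R) (hp : H × H) : Prop :=
  c ∈ I.couples ∧ hp ∈ I.couplePref c ∧
  ((M c.1 = none ∧ M c.2 = none) ∨
    ∃ hp' ∈ I.couplePref c, M c.1 = some hp'.1 ∧ M c.2 = some hp'.2 ∧
      Prefers (I.couplePref c) hp hp') ∧
  (M c.1 = some hp.1 ∨ I.HospOpenFor M hp.1 c.1) ∧
  (M c.2 = some hp.2 ∨ I.HospOpenFor M hp.2 c.2)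

/-- `M` is a stable matching of the instance `I`. -/
def Stable (I : HRC1 R H) (M : R → Option H) : Prop :=
  I.IsMatching M ∧ (∀ r h, ¬ I.BlockSingle M r h) ∧ (∀ c hp, ¬ I.BlockCouple M c hp)

end HRC1

/-- An instance of (2,2)-E3-SAT: `m` clauses, each with exactly 3 literals over `n`
variables (a literal is a variable together with a polarity, `true` for positive);
`occ l` enumerates the two occurrences of the literal `l`, so that each of the literals
`vᵢ` and `¬vᵢ` appears exactly twice. -/
structure E3SAT (n m : ℕ) where
  clause : Fin m → Fin 3 → Fin n × Bool
  occ : Fin n × Bool → Fin 2 → Fin m × Fin 3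
  occ_spec : ∀ l r, clause (occ l r).1 (occ l r).2 = l
  occ_inj : ∀ l, occ l 0 ≠ occ l 1
  occ_surj : ∀ j s, ∃ r, occ (clause j s) r = (j, s)

namespace E3SAT

variable {n m : ℕ}

/-- `B` is satisfiable. -/
def Satisfiable (B : E3SAT n m) : Prop :=
  ∃ f : Fin n → Bool, ∀ j : Fin m, ∃ s : Fin 3, f (B.clause j s).1 = (B.clause j s).2

/-- The index (`0` or `1`) of the occurrence of its literal that position `s` of
clause `j` constitutes. -/
def rIdx (B : E3SAT n m) (j : Fin m) (s : Fin 3) : Fin 2 :=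
  if B.occ (B.clause j s) 0 = (j, s) then 0 else 1

end E3SAT

/-- Residents of the instance `I(B)`: `a i r = a_i^{r+1}`, `b i r = b_i^{r+1}`,
`x j s = x_j^{s+1}`, `y j s = y_j^{s+1}` (indices are 0-based). -/
inductive Res (n m : ℕ)
  | a (i : Fin n) (r : Fin 2)
  | b (i : Fin n) (r : Fin 2)
  | x (j : Fin m) (s : Fin 3)
  | y (j : Fin m) (s : Fin 3)
deriving DecidableEq

/-- Hospitals of the instance `I(B)`: `h i k = h_i^{k+1}`, `t j k = t_j^{k+1}`
(indices are 0-based). -/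
inductive Hos (n m : ℕ)
  | h (i : Fin n) (k : Fin 6)
  | t (j : Fin m) (k : Fin 6)
deriving DecidableEq

variable {n m : ℕ}

/-- The hospital `h(x_j^s)`: if the `r`-th occurrence of literal `vᵢ` is at position `s`
of clause `c_j` then `h(x_j^s) = h_i^{2r+1}`; if the `r`-th occurrence of `¬vᵢ` is at
position `s` of `c_j` then `h(x_j^s) = h_i^{2r+2}` (with `r ∈ {1,2}`, 1-based). -/
def hX (B : E3SAT n m) (j : Fin m) (s : Fin 3) : Hos n m :=
  let l := B.clause j s
  let v := (B.rIdx j s).val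
  have hv : v < 2 := (B.rIdx j s).isLt
  Hos.h l.1 (if l.2 then ⟨2 * v + 2, by omega⟩ else ⟨2 * v + 3, by omega⟩)

/-- The resident `x(h_i^{k+1})` for `k ∈ {2,3,4,5}` (0-based), i.e. the
resident `x_j^s` corresponding to a variable hospital for variable `i`. -/
def xOfH (B : E3SAT n m) (i : Fin n) (k : Fin 6) : Res n m :=
  let o := B.occ (i, decide (k.val % 2 = 0)) (if k.val < 4 then 0 else 1)
  Res.x o.1 o.2

/-- The one-to-one HRC instance `I(B)` constructed from the (2,2)-E3-SAT instance `B`. -/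
def instI (B : E3SAT n m) : HRC1 (Res n m) (Hos n m) where
  singles := []
  couples :=
    ((List.finRange n).flatMap fun i =>
      (List.finRange 2).map fun r => (Res.a i r, Res.b i r)) ++
    ((List.finRange m).flatMap fun j =>
      (List.finRange 3).map fun s => (Res.x j s, Res.y j s))
  singlePref := fun _ => []
  couplePref := fun c => match c with
    | (Res.a i r, Res.b i' r') =>
        if i' = i ∧ r' = r then
          if r = 0 then [(Hos.h i 0, Hos.h i 2), (Hos.h i 1, Hos.h i 3)]
          else [(Hos.h i 1, Hos.h i 4), (Hos.h i 0, Hos.h i 5)]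
        else []
    | (Res.x j s, Res.y j' s') =>
        if j' = j ∧ s' = s then
          if s = 0 then [(hX B j 0, Hos.t j 3), (Hos.t j 0, Hos.t j 2)]
          else if s = 1 then [(hX B j 1, Hos.t j 4), (Hos.t j 1, Hos.t j 0)]
          else [(hX B j 2, Hos.t j 5), (Hos.t j 2, Hos.t j 1)]
        else []
    | _ => []
  hospPref := fun hh => match hh with
    | Hos.h i k =>
        if k = 0 then [Res.a i 1, Res.a i 0]
        else if k = 1 then [Res.a i 0, Res.a i 1]
        else if k = 2 then [Res.b i 0, xOfH B i 2]
        else if k = 3 then [Res.b i 0, xOfH B i 3]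
        else if k = 4 then [Res.b i 1, xOfH B i 4]
        else [Res.b i 1, xOfH B i 5]
    | Hos.t j k =>
        if k = 0 then [Res.x j 0, Res.y j 1]
        else if k = 1 then [Res.x j 1, Res.y j 2]
        else if k = 2 then [Res.x j 2, Res.y j 0]
        else if k = 3 then [Res.y j 0]
        else if k = 4 then [Res.y j 1]
        else [Res.y j 2]

/-!
Given a satisfying assignment `f`, the variable couples of `vᵢ` take their first choices when
`vᵢ` is false and their second choices when it is true; either way `b_i^r` occupies the hospital
of the `r`-th occurrence of the false literal of `vᵢ`. The couple `(x_j^s, y_j^s)` then takes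
`(h(x_j^s), t_j^{s+3})` when its literal is true, `(t_j^s, t_j^{s-1})` (upper indices of `t_j`
modulo 3) when it is false but the previous literal of `c_j` is true, and stays unmatched
otherwise; every potential blocking pair meets a hospital held by the head of its list.

Conversely, in a stable matching an unmatched variable couple would block with its second
choice, and the two couples of `vᵢ` cannot sit at choices of different rank (they would share
`h_i^1` or `h_i^2`); this defines the assignment. If no `x_j^s` held `h(x_j^s)`, two cyclically
consecutive clause couples of `c_j` would be unmatched, and the later of them would block with
its second choice. An `x_j^s` holding `h(x_j^s)` makes its literal true, as otherwise `b` would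
hold that hospital.
-/

namespace HRC1

section Prefers

variable {α : Type} [DecidableEq α]

theorem not_prefers_head {x y : α} {l : List α} : ¬ Prefers (x :: l) y x := by
  rintro ⟨-, -, h⟩
  simp at h

theorem prefers_head {x y : α} {l : List α} (hy : y ∈ x :: l) (hne : y ≠ x) :
    Prefers (x :: l) x y :=
  ⟨List.mem_cons_self, hy, by simp [List.idxOf_cons_ne _ hne.symm]⟩

theorem eq_of_prefers_pair {x y z : α} (h : Prefers [x, y] z y) : z = x := by
  obtain ⟨hz, -, hlt⟩ := h
  rcases List.mem_pair.1 hz with rfl | rfl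
  · rfl
  · exact absurd hlt (lt_irrefl _)

end Prefers

variable {R H : Type} {I : HRC1 R H} {M : R → Option H}

def IsAdmissible (I : HRC1 R H) (M : R → Option H) : Prop :=
  (∀ r ∈ I.singles, ∀ h, M r = some h → h ∈ I.singlePref r) ∧
  (∀ c ∈ I.couples,
    (M c.1 = none ∧ M c.2 = none) ∨
    ∃ hp ∈ I.couplePref c, M c.1 = some hp.1 ∧ M c.2 = some hp.2) ∧
  (∀ r, (M r).isSome → r ∈ I.singles ∨ ∃ c ∈ I.couples, r = c.1 ∨ r = c.2)

theorem IsMatching.isAdmissible (hM : I.IsMatching M) : I.IsAdmissible M := hM.2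

def MutuallyAcceptable (I : HRC1 R H) : Prop :=
  (∀ r ∈ I.singles, ∀ h ∈ I.singlePref r, r ∈ I.hospPref h) ∧
  ∀ c ∈ I.couples, ∀ hp ∈ I.couplePref c, c.1 ∈ I.hospPref hp.1 ∧ c.2 ∈ I.hospPref hp.2

theorem IsAdmissible.mem_hospPref (hI : I.MutuallyAcceptable) (hM : I.IsAdmissible M)
    {r : R} {h : H} (hr : M r = some h) : r ∈ I.hospPref h := by
  obtain ⟨hsingle, hcouple, hcover⟩ := hM
  rcases hcover r (by simp [hr]) with hs | ⟨c, hc, rfl | rfl⟩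
  · exact hI.1 r hs h (hsingle r hs h hr)
  all_goals
    rcases hcouple c hc with ⟨h₁, h₂⟩ | ⟨hp, hp_mem, h₁, h₂⟩
    · simp_all
  · obtain rfl : hp.1 = h := Option.some.inj (h₁.symm.trans hr)
    exact (hI.2 c hc hp hp_mem).1
  · obtain rfl : hp.2 = h := Option.some.inj (h₂.symm.trans hr)
    exact (hI.2 c hc hp hp_mem).2

theorem IsAdmissible.couple_cases (hM : I.IsAdmissible M) {c : R × R} {p q : H × H}
    (hc : c ∈ I.couples) (hl : I.couplePref c = [p, q]) :
    (M c.1 = none ∧ M c.2 = none) ∨ (M c.1 = some p.1 ∧ M c.2 = some p.2) ∨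
      (M c.1 = some q.1 ∧ M c.2 = some q.2) := by
  rcases hM.2.1 c hc with hnone | ⟨hp, hp_mem, hmatch⟩
  · exact Or.inl hnone
  · rw [hl, List.mem_pair] at hp_mem
    rcases hp_mem with rfl | rfl
    · exact Or.inr (Or.inl hmatch)
    · exact Or.inr (Or.inr hmatch)

theorem IsAdmissible.isMatching (hI : I.MutuallyAcceptable) (hM : I.IsAdmissible M)
    (hpw : ∀ h, (I.hospPref h).Pairwise fun r r' => M r = some h → M r' ≠ some h) :
    I.IsMatching M := by
  refine ⟨fun r₁ r₂ h h₁ h₂ => by_contra fun hne => ?_, hM⟩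
  have : Std.Symm fun r r' => M r = some h → M r' ≠ some h := ⟨fun _ _ hab hb ha => hab ha hb⟩
  exact (hpw h).forall (hM.mem_hospPref hI h₁) (hM.mem_hospPref hI h₂) hne h₁ h₂

variable [DecidableEq R]

-- The condition that `BlockCouple` imposes on each hospital of the pair.
def Accepts (I : HRC1 R H) (M : R → Option H) (h : H) (r : R) : Prop :=
  M r = some h ∨ I.HospOpenFor M h r

theorem accepts_of_head (hI : I.MutuallyAcceptable) (hM : I.IsAdmissible M) {h : H} {r : R}
    {l : List R} (hl : I.hospPref h = r :: l) : I.Accepts M h r := by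
  by_cases hr : M r = some h
  · exact Or.inl hr
  by_cases hocc : ∃ r', M r' = some h
  · obtain ⟨r', hr'⟩ := hocc
    have hmem := hM.mem_hospPref hI hr'
    rw [hl] at hmem
    exact Or.inr (Or.inr ⟨r', hr', hl ▸ prefers_head hmem (by rintro rfl; exact hr hr')⟩)
  · exact Or.inr (Or.inl fun r' hr' => hocc ⟨r', hr'⟩)

theorem accepts_of_unoccupied (hI : I.MutuallyAcceptable) (hM : I.IsAdmissible M) {h : H}
    (hfree : ∀ r' ∈ I.hospPref h, M r' ≠ some h) (r : R) : I.Accepts M h r :=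
  Or.inr (Or.inl fun r' hr' => hfree r' (hM.mem_hospPref hI hr') hr')

theorem not_accepts_of_head (hM : I.IsMatching M) {h : H} {r r₀ : R} {l : List R}
    (hl : I.hospPref h = r₀ :: l) (h₀ : M r₀ = some h) (hne : r ≠ r₀) : ¬ I.Accepts M h r := by
  rintro (hr | hfree | ⟨r', hr', hpref⟩)
  · exact hne (hM.1 _ _ _ hr h₀)
  · exact hfree r₀ h₀
  · rw [hM.1 _ _ _ hr' h₀, hl] at hpref
    exact not_prefers_head hpref

variable [DecidableEq H]

theorem blockCouple_of_unmatched {c : R × R} {p : H × H} (hc : c ∈ I.couples)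
    (hp : p ∈ I.couplePref c) (hnone : M c.1 = none ∧ M c.2 = none)
    (h₁ : I.Accepts M p.1 c.1) (h₂ : I.Accepts M p.2 c.2) : I.BlockCouple M c p :=
  ⟨hc, hp, Or.inl hnone, h₁, h₂⟩

theorem not_blockCouple_of_refused {c : R × R}
    (hrefuse : ∀ p ∈ I.couplePref c, ¬ I.Accepts M p.1 c.1 ∨ ¬ I.Accepts M p.2 c.2)
    (p : H × H) : ¬ I.BlockCouple M c p := by
  rintro ⟨-, hp, -, h₁, h₂⟩
  rcases hrefuse p hp with h | h <;> contradiction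

theorem not_blockCouple_of_head {c : R × R} {p : H × H} {l : List (H × H)}
    (hl : I.couplePref c = p :: l) (hc : M c.1 = some p.1 ∧ M c.2 = some p.2) (p' : H × H) :
    ¬ I.BlockCouple M c p' := by
  rintro ⟨-, -, ⟨hnone, -⟩ | ⟨q, -, hq₁, hq₂, hpref⟩, -, -⟩
  · simp [hc.1] at hnone
  · obtain rfl : q = p :=
      Prod.ext (Option.some.inj (hq₁.symm.trans hc.1)) (Option.some.inj (hq₂.symm.trans hc.2))
    rw [hl] at hpref
    exact not_prefers_head hpref

theorem not_blockCouple_of_second {c : R × R} {p q : H × H} (hl : I.couplePref c = [p, q])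
    (hc : M c.1 = some q.1 ∧ M c.2 = some q.2)
    (hrefuse : ¬ I.Accepts M p.1 c.1 ∨ ¬ I.Accepts M p.2 c.2) (p' : H × H) :
    ¬ I.BlockCouple M c p' := by
  rintro ⟨-, -, ⟨hnone, -⟩ | ⟨q', -, hq₁, hq₂, hpref⟩, h₁, h₂⟩
  · simp [hc.1] at hnone
  · obtain rfl : q' = q :=
      Prod.ext (Option.some.inj (hq₁.symm.trans hc.1)) (Option.some.inj (hq₂.symm.trans hc.2))
    rw [hl] at hpref
    obtain rfl := eq_of_prefers_pair hpref
    rcases hrefuse with h | h <;> contradiction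

end HRC1

theorem E3SAT.occ_rIdx (B : E3SAT n m) (j : Fin m) (s : Fin 3) :
    B.occ (B.clause j s) (B.rIdx j s) = (j, s) := by
  unfold E3SAT.rIdx
  split_ifs with h0
  · exact h0
  · obtain ⟨r, hr⟩ := B.occ_surj j s
    fin_cases r
    · exact absurd hr h0
    · exact hr

theorem fin3_eq_or_eq_sub_one_or_eq_add_one (s t : Fin 3) : t = s ∨ t = s - 1 ∨ t = s + 1 := by
  revert s t
  decide

theorem fin3_sub_one_sub_one (s : Fin 3) : s - 1 - 1 = s + 1 := by
  revert s
  decide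

theorem fin3_exists_consecutive {U : Fin 3 → Prop} (h : ∀ s, U s ∨ U (s + 1)) :
    ∃ s, U s ∧ U (s - 1) := by
  by_cases h0 : U 0
  · by_cases h2 : U 2
    · exact ⟨0, h0, h2⟩
    · exact ⟨1, (h 1).resolve_right h2, h0⟩
  · exact ⟨2, (h 2).resolve_right h0, (h 0).resolve_left h0⟩

def litIdx (p : Bool) (r : Fin 2) : Fin 6 :=
  if p then ⟨2 * r.val + 2, by omega⟩ else ⟨2 * r.val + 3, by omega⟩

namespace Hos

/- `var i r = h_i^{r+1}`, `lit i p r` is the hospital of the `r`-th occurrence of the literal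
`(i, p)`, `cyc j s = t_j^{s+1}` and `priv j s = t_j^{s+4}`, with `r` and `s` 0-based as in `Res`. -/

def var (i : Fin n) (r : Fin 2) : Hos n m := .h i ⟨r, by omega⟩

def lit (i : Fin n) (p : Bool) (r : Fin 2) : Hos n m := .h i (litIdx p r)

def cyc (j : Fin m) (s : Fin 3) : Hos n m := .t j ⟨s, by omega⟩

def priv (j : Fin m) (s : Fin 3) : Hos n m := .t j ⟨s + 3, by omega⟩

@[simp] theorem var_inj {i i' : Fin n} {r r' : Fin 2} :
    (var i r : Hos n m) = var i' r' ↔ i = i' ∧ r = r' := by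
  simp [var, Fin.ext_iff]

@[simp] theorem lit_inj {i i' : Fin n} {p p' : Bool} {r r' : Fin 2} :
    (lit i p r : Hos n m) = lit i' p' r' ↔ i = i' ∧ p = p' ∧ r = r' := by
  simp only [lit, h.injEq, and_congr_right_iff]
  intro _
  revert p p' r r'
  decide

@[simp] theorem lit_ne_cyc (i : Fin n) (p : Bool) (r : Fin 2) (j : Fin m) (s : Fin 3) :
    (lit i p r : Hos n m) ≠ cyc j s := by
  simp [lit, cyc]

@[simp] theorem priv_ne_cyc (j j' : Fin m) (s s' : Fin 3) : (priv j s : Hos n m) ≠ cyc j' s' := by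
  simp [priv, cyc, Fin.ext_iff]
  omega

theorem cases_var_lit_cyc_priv (hh : Hos n m) :
    (∃ i r, hh = var i r) ∨ (∃ i p r, hh = lit i p r) ∨ (∃ j s, hh = cyc j s) ∨
      ∃ j s, hh = priv j s := by
  rcases hh with ⟨i, k⟩ | ⟨j, k⟩
  · fin_cases k
    exacts [Or.inl ⟨i, 0, rfl⟩, Or.inl ⟨i, 1, rfl⟩, Or.inr (Or.inl ⟨i, true, 0, rfl⟩),
      Or.inr (Or.inl ⟨i, false, 0, rfl⟩), Or.inr (Or.inl ⟨i, true, 1, rfl⟩),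
      Or.inr (Or.inl ⟨i, false, 1, rfl⟩)]
  · fin_cases k
    exacts [Or.inr (Or.inr (Or.inl ⟨j, 0, rfl⟩)), Or.inr (Or.inr (Or.inl ⟨j, 1, rfl⟩)),
      Or.inr (Or.inr (Or.inl ⟨j, 2, rfl⟩)), Or.inr (Or.inr (Or.inr ⟨j, 0, rfl⟩)),
      Or.inr (Or.inr (Or.inr ⟨j, 1, rfl⟩)), Or.inr (Or.inr (Or.inr ⟨j, 2, rfl⟩))]

end Hos

section Instance

open Hos

variable (B : E3SAT n m)

theorem hX_eq_lit (j : Fin m) (s : Fin 3) :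
    hX B j s = lit (B.clause j s).1 (B.clause j s).2 (B.rIdx j s) := rfl

theorem hospPref_var (i : Fin n) (r : Fin 2) :
    (instI B).hospPref (var i r) = [.a i (1 - r), .a i r] := by
  fin_cases r <;> rfl

theorem hospPref_lit (i : Fin n) (p : Bool) (r : Fin 2) :
    (instI B).hospPref (lit i p r) = [.b i r, .x (B.occ (i, p) r).1 (B.occ (i, p) r).2] := by
  cases p <;> fin_cases r <;> rfl

theorem hospPref_hX (j : Fin m) (s : Fin 3) :
    (instI B).hospPref (hX B j s) = [.b (B.clause j s).1 (B.rIdx j s), .x j s] := by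
  rw [hX_eq_lit, hospPref_lit, Prod.mk.eta, B.occ_rIdx]

theorem hospPref_cyc (j : Fin m) (s : Fin 3) :
    (instI B).hospPref (cyc j s) = [.x j s, .y j (s + 1)] := by
  fin_cases s <;> rfl

theorem hospPref_priv (j : Fin m) (s : Fin 3) : (instI B).hospPref (priv j s) = [.y j s] := by
  fin_cases s <;> rfl

theorem couplePref_ab (i : Fin n) (r : Fin 2) :
    (instI B).couplePref (.a i r, .b i r) =
      [(var i r, lit i true r), (var i (1 - r), lit i false r)] := by
  fin_cases r <;> simp [instI] <;> exact ⟨⟨rfl, rfl⟩, rfl, rfl⟩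

theorem couplePref_xy (j : Fin m) (s : Fin 3) :
    (instI B).couplePref (.x j s, .y j s) = [(hX B j s, priv j s), (cyc j s, cyc j (s - 1))] := by
  fin_cases s <;> simp [instI] <;> exact ⟨rfl, rfl, rfl⟩

theorem mem_couples_iff (c : Res n m × Res n m) :
    c ∈ (instI B).couples ↔ (∃ i r, c = (.a i r, .b i r)) ∨ ∃ j s, c = (.x j s, .y j s) := by
  simp only [instI, List.mem_append, List.mem_flatMap, List.mem_finRange, List.mem_map, true_and]
  constructor
  · rintro (⟨i, r, rfl⟩ | ⟨j, s, rfl⟩)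
    exacts [Or.inl ⟨i, r, rfl⟩, Or.inr ⟨j, s, rfl⟩]
  · rintro (⟨i, r, rfl⟩ | ⟨j, s, rfl⟩)
    exacts [Or.inl ⟨i, r, rfl⟩, Or.inr ⟨j, s, rfl⟩]

theorem instI_mutuallyAcceptable : (instI B).MutuallyAcceptable := by
  refine ⟨by simp [instI], fun c hc hp hp_mem => ?_⟩
  rcases (mem_couples_iff B c).1 hc with ⟨i, r, rfl⟩ | ⟨j, s, rfl⟩
  · rw [couplePref_ab, List.mem_pair] at hp_mem
    rcases hp_mem with rfl | rfl
    · simp [hospPref_var, hospPref_lit]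
    · simp [hospPref_var, hospPref_lit, sub_sub_cancel]
  · rw [couplePref_xy, List.mem_pair] at hp_mem
    rcases hp_mem with rfl | rfl
    · simp [hospPref_hX, hospPref_priv]
    · simp [hospPref_cyc]

end Instance

abbrev E3SAT.LitTrue (B : E3SAT n m) (f : Fin n → Bool) (j : Fin m) (s : Fin 3) : Prop :=
  f (B.clause j s).1 = (B.clause j s).2

open HRC1 Hos

def matchingOf (B : E3SAT n m) (f : Fin n → Bool) : Res n m → Option (Hos n m)
  | .a i r => some (var i (if f i then 1 - r else r))
  | .b i r => some (lit i (!f i) r)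
  | .x j s => if B.LitTrue f j s then some (hX B j s)
      else if B.LitTrue f j (s - 1) then some (cyc j s) else none
  | .y j s => if B.LitTrue f j s then some (priv j s)
      else if B.LitTrue f j (s - 1) then some (cyc j (s - 1)) else none

section Forward

variable {B : E3SAT n m} {f : Fin n → Bool}

theorem matchingOf_isAdmissible : (instI B).IsAdmissible (matchingOf B f) := by
  refine ⟨by simp [instI], fun c hc => ?_, ?_⟩
  · rcases (mem_couples_iff B c).1 hc with ⟨i, r, rfl⟩ | ⟨j, s, rfl⟩
    · right
      rw [couplePref_ab]
      cases hfi : f i <;> simp [matchingOf, hfi]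
    · rw [couplePref_xy]
      simp only [matchingOf]
      split_ifs <;> simp
  · rintro (⟨i, r⟩ | ⟨i, r⟩ | ⟨j, s⟩ | ⟨j, s⟩) -
    · exact Or.inr ⟨_, (mem_couples_iff B _).2 (Or.inl ⟨i, r, rfl⟩), Or.inl rfl⟩
    · exact Or.inr ⟨_, (mem_couples_iff B _).2 (Or.inl ⟨i, r, rfl⟩), Or.inr rfl⟩
    · exact Or.inr ⟨_, (mem_couples_iff B _).2 (Or.inr ⟨j, s, rfl⟩), Or.inl rfl⟩
    · exact Or.inr ⟨_, (mem_couples_iff B _).2 (Or.inr ⟨j, s, rfl⟩), Or.inr rfl⟩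

theorem matchingOf_isMatching : (instI B).IsMatching (matchingOf B f) := by
  refine matchingOf_isAdmissible.isMatching (instI_mutuallyAcceptable B) fun hh => ?_
  rcases cases_var_lit_cyc_priv hh with ⟨i, r, rfl⟩ | ⟨i, p, r, rfl⟩ | ⟨j, s, rfl⟩ | ⟨j, s, rfl⟩
  · cases hfi : f i <;> simp [hospPref_var, matchingOf, hfi] <;> revert r <;> decide
  · simp only [hospPref_lit, matchingOf, List.pairwise_pair, Option.some.injEq, lit_inj, true_and,
      and_imp]
    rintro rfl -
    split_ifs <;> simp_all [E3SAT.LitTrue, B.occ_spec, (lit_ne_cyc _ _ _ _ _).symm]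
  · simp only [hospPref_cyc, matchingOf, List.pairwise_pair, add_sub_cancel_right]
    split_ifs <;> simp_all [hX_eq_lit]
  · simp [hospPref_priv]

theorem matchingOf_not_blockCouple_ab (i : Fin n) (r : Fin 2) (p : Hos n m × Hos n m) :
    ¬ (instI B).BlockCouple (matchingOf B f) (.a i r, .b i r) p := by
  cases hfi : f i
  · exact not_blockCouple_of_head (couplePref_ab B i r) (by simp [matchingOf, hfi]) p
  · refine not_blockCouple_of_second (couplePref_ab B i r) (by simp [matchingOf, hfi])
      (Or.inl (not_accepts_of_head matchingOf_isMatching (hospPref_var B i r)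
        (by simp [matchingOf, hfi, sub_sub_cancel]) ?_)) p
    simp only [ne_eq, Res.a.injEq, true_and]
    revert r
    decide

theorem matchingOf_not_blockCouple_xy (hf : ∀ j, ∃ s, B.LitTrue f j s) (j : Fin m) (s : Fin 3)
    (p : Hos n m × Hos n m) : ¬ (instI B).BlockCouple (matchingOf B f) (.x j s, .y j s) p := by
  by_cases hs : B.LitTrue f j s
  · exact not_blockCouple_of_head (couplePref_xy B j s) (by simp [matchingOf, hs]) p
  have hb : matchingOf B f (.b (B.clause j s).1 (B.rIdx j s)) = some (hX B j s) := by
    simp [matchingOf, hX_eq_lit, Bool.eq_not.mpr hs]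
  have hX_refuses : ¬ (instI B).Accepts (matchingOf B f) (hX B j s) (.x j s) :=
    not_accepts_of_head matchingOf_isMatching (hospPref_hX B j s) hb (by simp)
  by_cases hs' : B.LitTrue f j (s - 1)
  · exact not_blockCouple_of_second (couplePref_xy B j s) (by simp [matchingOf, hs, hs'])
      (Or.inl hX_refuses) p
  have hs'' : B.LitTrue f j (s + 1) := by
    obtain ⟨t, ht⟩ := hf j
    rcases fin3_eq_or_eq_sub_one_or_eq_add_one s t with rfl | rfl | rfl <;> trivial
  have hx : matchingOf B f (.x j (s - 1)) = some (cyc j (s - 1)) := by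
    simp [matchingOf, hs', fin3_sub_one_sub_one, hs'']
  refine not_blockCouple_of_refused (fun q hq => ?_) p
  rw [couplePref_xy, List.mem_pair] at hq
  rcases hq with rfl | rfl
  · exact Or.inl hX_refuses
  · exact Or.inr (not_accepts_of_head matchingOf_isMatching (hospPref_cyc B j (s - 1)) hx (by simp))

theorem matchingOf_stable (hf : ∀ j, ∃ s, B.LitTrue f j s) :
    (instI B).Stable (matchingOf B f) := by
  refine ⟨matchingOf_isMatching, fun r h hb => by simpa [instI] using hb.1, fun c p hb => ?_⟩
  rcases (mem_couples_iff B c).1 hb.1 with ⟨i, r, rfl⟩ | ⟨j, s, rfl⟩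
  · exact matchingOf_not_blockCouple_ab i r p hb
  · exact matchingOf_not_blockCouple_xy hf j s p hb

end Forward

section Backward

variable {B : E3SAT n m} {M : Res n m → Option (Hos n m)}

theorem exists_truth_value_of_stable (hS : (instI B).Stable M) (i : Fin n) :
    ∃ v : Bool, ∀ r, M (.a i r) = some (var i (if v then 1 - r else r)) ∧
      M (.b i r) = some (lit i (!v) r) := by
  obtain ⟨hM, -, hblock⟩ := hS
  have hI := instI_mutuallyAcceptable B
  have hcouple (r : Fin 2) : ∃ v : Bool, M (.a i r) = some (var i (if v then 1 - r else r)) ∧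
      M (.b i r) = some (lit i (!v) r) := by
    have hc := (mem_couples_iff B (.a i r, .b i r)).2 (Or.inl ⟨i, r, rfl⟩)
    rcases hM.isAdmissible.couple_cases hc (couplePref_ab B i r) with hnone | hfirst | hsecond
    · refine (hblock _ (var i (1 - r), lit i false r)
        (blockCouple_of_unmatched hc (by simp [couplePref_ab]) hnone ?_ ?_)).elim
      · exact accepts_of_head hI hM.isAdmissible (by rw [hospPref_var, sub_sub_cancel])
      · exact accepts_of_head hI hM.isAdmissible (hospPref_lit B i false r)
    · exact ⟨false, by simpa using hfirst⟩
    · exact ⟨true, by simpa using hsecond⟩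
  choose v hv using hcouple
  have hv₁ : v 1 = v 0 := by
    cases h₀ : v 0 <;> cases h₁ : v 1
    all_goals first
      | rfl
      | exact absurd (Res.a.inj (hM.1 _ _ _ (hv 0).1 (by simpa [h₀, h₁] using (hv 1).1))).2
          (by decide)
  refine ⟨v 0, fun r => ?_⟩
  fin_cases r
  · exact hv 0
  · exact hv₁ ▸ hv 1

theorem exists_x_at_hX_of_stable (hS : (instI B).Stable M) (j : Fin m) :
    ∃ s, M (.x j s) = some (hX B j s) := by
  obtain ⟨hM, -, hblock⟩ := hS
  have hI := instI_mutuallyAcceptable B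
  have hA := hM.isAdmissible
  have hc (s : Fin 3) := (mem_couples_iff B (.x j s, .y j s)).2 (Or.inr ⟨j, s, rfl⟩)
  by_contra! hnone
  have hstate (s : Fin 3) : (M (.x j s) = none ∧ M (.y j s) = none) ∨
      (M (.x j s) = some (cyc j s) ∧ M (.y j s) = some (cyc j (s - 1))) :=
    (hA.couple_cases (hc s) (couplePref_xy B j s)).imp_right
      (Or.resolve_left · fun h => hnone s h.1)
  have hunmatched {s : Fin 3} (hs : M (.x j s) = none) : M (.y j s) = none :=
    ((hstate s).resolve_right fun h => by simp [hs] at h).2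
  -- `x j s` and `y j (s + 1)` compete for `cyc j s`
  have hgap (s : Fin 3) : M (.x j s) = none ∨ M (.x j (s + 1)) = none := by
    rcases hstate s with h | h
    · exact Or.inl h.1
    rcases hstate (s + 1) with h' | h'
    · exact Or.inr h'.1
    rw [add_sub_cancel_right] at h'
    simpa using hM.1 _ _ _ h.1 h'.2
  obtain ⟨s, hs, hs'⟩ := fin3_exists_consecutive hgap
  refine hblock _ (cyc j s, cyc j (s - 1)) (blockCouple_of_unmatched (hc s)
    (by simp [couplePref_xy]) ⟨hs, hunmatched hs⟩ (accepts_of_head hI hA (hospPref_cyc B j s))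
    (accepts_of_unoccupied hI hA ?_ _))
  simp [hospPref_cyc, hs', hunmatched hs]

theorem satisfiable_of_stable (hS : (instI B).Stable M) : B.Satisfiable := by
  choose v hv using exists_truth_value_of_stable hS
  refine ⟨v, fun j => ?_⟩
  obtain ⟨s, hs⟩ := exists_x_at_hX_of_stable hS j
  refine ⟨s, by_contra fun hne => ?_⟩
  have hb : M (.b (B.clause j s).1 (B.rIdx j s)) = some (hX B j s) := by
    simp [(hv _ _).2, hX_eq_lit, Bool.eq_not.mpr hne]
  simpa using hS.1.1 _ _ _ hb hs

end Backward

/-- `B` is satisfiable if and only if `I(B)` admits a stable matching. -/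
theorem satisfiable_iff_instI_admits_stable {n m : ℕ} (B : E3SAT n m) :
    B.Satisfiable ↔ ∃ M : Res n m → Option (Hos n m), (instI B).Stable M := by
  constructor
  · rintro ⟨f, hf⟩
    exact ⟨matchingOf B f, matchingOf_stable hf⟩
  · rintro ⟨M, hS⟩
    exact satisfiable_of_stable hS
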